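/- arXiv:1911.04867 — 2 statements merged into one kernel-verified Lean document; each statement's English description precedes it below -/
import Mathlib

section
/- Let (X,G) be a G-metric space with a convex structure W, and let T : X → X be a mapping having a fixed point u (Tu = u) such that G(Tx,Ty,Tz) ≤ k·(G(x,Tx,Tx) + G(y,Ty,Ty) + G(z,Tz,Tz)) for all x,y,z ∈ X, where 0 < k < 1/3. Let (α_n) be a sequence in [0,1] with ∑_{n=0}^∞ α_n = ∞, let x_0 ∈ X, and define the Mann iterative process x_{n+1} = W(x_n, T x_n; 1−α_n, α_n). Then G(x_n, u, u) → 0 as n → ∞, i.e. (x_n) converges strongly to the fixed point u of T. -/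
open Filter Topology

/-- A G-metric on a set `X` (Mustafa–Sims). The symmetry axiom (G5) is recorded via
the two generating permutations (swap of last two arguments and a cyclic shift),
from which all six equalities of (G5) follow. -/
structure GMetricStruct (X : Type*) where
  G : X → X → X → ℝ
  nonneg : ∀ x y z, 0 ≤ G x y z
  eq_zero_of_eq : ∀ x y z, x = y → y = z → G x y z = 0
  pos_of_ne : ∀ x y, x ≠ y → 0 < G x x y
  le_of_ne : ∀ x y z, z ≠ y → G x x y ≤ G x y z
  symm_swap : ∀ x y z, G x y z = G x z y
  symm_cycle : ∀ x y z, G x y z = G y z x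
  rect : ∀ x y z a, G x y z ≤ G x a a + G a y z

/-- A convex structure `W` on a G-metric space `(X, G)`:
for all `x, y, u, v` and `λ, β ∈ [0,1]` with `λ + β = 1`,
`G(W(x,y;λ,β), u, v) ≤ λ·G(x,u,v) + β·G(y,u,v)`. -/
def IsConvexStructure {X : Type*} (GM : GMetricStruct X) (W : X → X → ℝ → ℝ → X) : Prop :=
  ∀ x y u v : X, ∀ lam beta : ℝ, lam ∈ Set.Icc (0:ℝ) 1 → beta ∈ Set.Icc (0:ℝ) 1 →
    lam + beta = 1 →
    GM.G (W x y lam beta) u v ≤ lam * GM.G x u v + beta * GM.G y u v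

/-!
At the fixed point `u`, the Kannan condition gives both `G(Ty,u,u) ≤ k·G(y,Ty,Ty)` and, with the
rectangle inequality, `(1 - 2k)·G(y,Ty,Ty) ≤ G(y,u,u)`; so `T` contracts towards `u` with
constant `c = k/(1-2k) < 1`. Convexity of `W` then yields
`G(x_{n+1},u,u) ≤ (1 - (1-c)α_n)·G(x_n,u,u) ≤ exp(-(1-c)α_n)·G(x_n,u,u)`,
and the product of these factors tends to `0` because `∑ α_n` diverges.
-/

theorem le_mul_exp_neg_sum {d b : ℕ → ℝ} (hd : ∀ n, 0 ≤ d n)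
    (hstep : ∀ n, d (n + 1) ≤ (1 - b n) * d n) (n : ℕ) :
    d n ≤ d 0 * Real.exp (-∑ i ∈ Finset.range n, b i) := by
  induction n with
  | zero => simp
  | succ m ih =>
    calc d (m + 1) ≤ (1 - b m) * d m := hstep m
      _ ≤ Real.exp (-b m) * d m := by
          gcongr
          · exact hd m
          · linarith [Real.add_one_le_exp (-b m)]
      _ ≤ Real.exp (-b m) * (d 0 * Real.exp (-∑ i ∈ Finset.range m, b i)) := by gcongr
      _ = d 0 * Real.exp (-∑ i ∈ Finset.range (m + 1), b i) := by
          rw [Finset.sum_range_succ, neg_add, Real.exp_add]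
          ring

theorem tendsto_zero_of_le_one_sub_mul {d b : ℕ → ℝ} (hd : ∀ n, 0 ≤ d n)
    (hstep : ∀ n, d (n + 1) ≤ (1 - b n) * d n)
    (hb : Tendsto (fun n => ∑ i ∈ Finset.range n, b i) atTop atTop) :
    Tendsto d atTop (𝓝 0) := by
  have hexp : Tendsto (fun n => d 0 * Real.exp (-∑ i ∈ Finset.range n, b i)) atTop (𝓝 0) := by
    simpa using (Real.tendsto_exp_atBot.comp (tendsto_neg_atTop_atBot.comp hb)).const_mul (d 0)
  exact squeeze_zero hd (le_mul_exp_neg_sum hd hstep) hexp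

namespace GMetricStruct

variable {X : Type*}

theorem G_self (GM : GMetricStruct X) (x : X) : GM.G x x x = 0 :=
  GM.eq_zero_of_eq x x x rfl rfl

def IsKannanType (GM : GMetricStruct X) (T : X → X) (k : ℝ) : Prop :=
  ∀ x y z : X, GM.G (T x) (T y) (T z) ≤
    k * (GM.G x (T x) (T x) + GM.G y (T y) (T y) + GM.G z (T z) (T z))

namespace IsKannanType

variable {GM : GMetricStruct X} {T : X → X} {k : ℝ} {u : X}

theorem G_self_image_mul_le (hT : IsKannanType GM T k) (hu : T u = u) (y : X) :
    GM.G y (T y) (T y) * (1 - 2 * k) ≤ GM.G y u u := by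
  have hrect := GM.rect y (T y) (T y) u
  have hkannan := hT u y y
  rw [hu, GM.G_self] at hkannan
  linarith

theorem G_image_le (hT : IsKannanType GM T k) (hu : T u = u) (y : X) :
    GM.G (T y) u u ≤ k * GM.G y (T y) (T y) := by
  have hkannan := hT y u u
  rw [hu, GM.G_self] at hkannan
  linarith

theorem G_image_le_mul (hT : IsKannanType GM T k) (hu : T u = u) (hk0 : 0 ≤ k)
    (hk : k < 1 / 2) (y : X) :
    GM.G (T y) u u ≤ k / (1 - 2 * k) * GM.G y u u := by
  have h2k : 0 < 1 - 2 * k := by linarith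
  calc GM.G (T y) u u ≤ k * GM.G y (T y) (T y) := hT.G_image_le hu y
    _ ≤ k * (GM.G y u u / (1 - 2 * k)) := by
        gcongr
        rw [le_div_iff₀ h2k]
        exact hT.G_self_image_mul_le hu y
    _ = k / (1 - 2 * k) * GM.G y u u := by ring

end IsKannanType

end GMetricStruct

namespace IsConvexStructure

variable {X : Type*} {GM : GMetricStruct X} {W : X → X → ℝ → ℝ → X}

theorem G_le (hW : IsConvexStructure GM W) {a : ℝ} (ha : a ∈ Set.Icc (0 : ℝ) 1) (x y u v : X) :
    GM.G (W x y (1 - a) a) u v ≤ (1 - a) * GM.G x u v + a * GM.G y u v :=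
  hW x y u v (1 - a) a ⟨by linarith [ha.2], by linarith [ha.1]⟩ ha (by ring)

theorem G_mann_step_le (hW : IsConvexStructure GM W) {T : X → X} {u : X} {c : ℝ}
    (hTc : ∀ y, GM.G (T y) u u ≤ c * GM.G y u u) {a : ℝ} (ha : a ∈ Set.Icc (0 : ℝ) 1) (y : X) :
    GM.G (W y (T y) (1 - a) a) u u ≤ (1 - (1 - c) * a) * GM.G y u u :=
  calc GM.G (W y (T y) (1 - a) a) u u ≤ (1 - a) * GM.G y u u + a * GM.G (T y) u u :=
        hW.G_le ha y (T y) u u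
    _ ≤ (1 - a) * GM.G y u u + a * (c * GM.G y u u) := by gcongr; exacts [ha.1, hTc y]
    _ = (1 - (1 - c) * a) * GM.G y u u := by ring

end IsConvexStructure

theorem mann_convergence_kannan_type_general {X : Type*} (GM : GMetricStruct X)
    (W : X → X → ℝ → ℝ → X) (hW : IsConvexStructure GM W)
    (T : X → X) (u : X) (hu : T u = u)
    (k : ℝ) (hk0 : 0 < k) (hk : k < 1 / 3)
    (hT : ∀ x y z : X, GM.G (T x) (T y) (T z) ≤
      k * (GM.G x (T x) (T x) + GM.G y (T y) (T y) + GM.G z (T z) (T z)))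
    (α : ℕ → ℝ) (hα : ∀ n, α n ∈ Set.Icc (0:ℝ) 1)
    (hdiv : Tendsto (fun n => ∑ k ∈ Finset.range n, α k) atTop atTop)
    (x : ℕ → X)
    (hrec : ∀ n, x (n + 1) = W (x n) (T (x n)) (1 - α n) (α n)) :
    Tendsto (fun n => GM.G (x n) u u) atTop (𝓝 0) := by
  have hc : k / (1 - 2 * k) < 1 := (div_lt_one (by linarith)).2 (by linarith)
  have hcontract := GMetricStruct.IsKannanType.G_image_le_mul hT hu hk0.le (by linarith)
  refine tendsto_zero_of_le_one_sub_mul (b := fun n => (1 - k / (1 - 2 * k)) * α n)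
    (fun n => GM.nonneg _ _ _) (fun n => ?_) ?_
  · rw [hrec n]
    exact hW.G_mann_step_le hcontract (hα n) (x n)
  · simpa [← Finset.mul_sum] using hdiv.const_mul_atTop (sub_pos.2 hc)

theorem mann_convergence_kannan_type {X : Type*} [Nonempty X] (GM : GMetricStruct X)
    (W : X → X → ℝ → ℝ → X) (hW : IsConvexStructure GM W)
    (T : X → X) (u : X) (hu : T u = u)
    (k : ℝ) (hk0 : 0 < k) (hk : k < 1 / 3)
    (hT : ∀ x y z : X, GM.G (T x) (T y) (T z) ≤
      k * (GM.G x (T x) (T x) + GM.G y (T y) (T y) + GM.G z (T z) (T z)))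
    (α : ℕ → ℝ) (hα : ∀ n, α n ∈ Set.Icc (0:ℝ) 1)
    (hdiv : Tendsto (fun n => ∑ k ∈ Finset.range n, α k) atTop atTop)
    (x₀ : X) (x : ℕ → X) (hx0 : x 0 = x₀)
    (hrec : ∀ n, x (n + 1) = W (x n) (T (x n)) (1 - α n) (α n)) :
    Tendsto (fun n => GM.G (x n) u u) atTop (𝓝 0) :=
  mann_convergence_kannan_type_general GM W hW T u hu k hk0 hk hT α hα hdiv x hrec
end

section
/- Let (X,G) be a G-metric space and let T : X → X be a mapping such that: (1) G(Tx,Ty,Tz) ≤ a·G(x,Tx,Tx) + b·G(y,Ty,Ty) + c·G(z,Tz,Tz) for all x,y,z ∈ X, where a,b,c are nonnegative real numbers with 0 < a + b + c < 1; (2) T is G-continuous at a point u ∈ X; and (3) there exists x ∈ X such that the sequence of iterates (T^n x) has a subsequence (T^{n_i} x) that G-converges to u. Then u is the unique fixed point of T (Tu = u, and u is the only point with this property). -/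
open Filter Topology

/-- A sequence `x` G-converges to `l` iff `G(x_n, x_n, l) → 0`. -/
def GConvergesTo {X : Type*} (GM : GMetricStruct X) (x : ℕ → X) (l : X) : Prop :=
  Tendsto (fun n => GM.G (x n) (x n) l) atTop (𝓝 0)

/-- A sequence `x` is G-Cauchy iff `G(x_n, x_m, x_l) → 0` as `n, m, l → ∞`. -/
def GCauchySeq {X : Type*} (GM : GMetricStruct X) (x : ℕ → X) : Prop :=
  ∀ ε : ℝ, 0 < ε → ∃ N : ℕ, ∀ n ≥ N, ∀ m ≥ N, ∀ l ≥ N, GM.G (x n) (x m) (x l) < ε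

/-- A G-metric space is complete iff every G-Cauchy sequence G-converges. -/
def GComplete {X : Type*} (GM : GMetricStruct X) : Prop :=
  ∀ x : ℕ → X, GCauchySeq GM x → ∃ l : X, GConvergesTo GM x l

/-- `T` is G-continuous at `u` iff it maps sequences G-converging to `u`
to sequences G-converging to `T u`. -/
def GContinuousAt {X : Type*} (GM : GMetricStruct X) (T : X → X) (u : X) : Prop :=
  ∀ y : ℕ → X, GConvergesTo GM y u → GConvergesTo GM (fun n => T (y n)) (T u)

/-!
Writing `p x y := G(x, y, y)`, `p` satisfies the triangle inequality (axiom G6) and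
`p x y ≤ 2 p y x`, and `xₙ` G-converges to `l` iff `p l xₙ → 0`. The contraction
condition with `y = z = Tx` gives `p(Tx, T²x) ≤ a/(1 - b - c) · p(x, Tx)`, so consecutive
iterates of any orbit get arbitrarily close. Along the subsequence, `Tⁿⁱx → u`, hence also
`Tⁿⁱ⁺¹x → u`, while continuity gives `Tⁿⁱ⁺¹x → Tu`; G-limits are unique, so `Tu = u`.
For two fixed points the contraction condition bounds `G(v, v, u)` by `0`.
-/

namespace GMetricStruct

variable {X : Type*} (GM : GMetricStruct X)

theorem G_self_self (x : X) : GM.G x x x = 0 :=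
  GM.eq_zero_of_eq x x x rfl rfl

theorem G_self_left_eq (x y : X) : GM.G x x y = GM.G y x x := by
  rw [GM.symm_cycle, GM.symm_cycle]

theorem G_le_two_mul (x y : X) : GM.G x y y ≤ 2 * GM.G y x x := by
  have h := GM.rect y y x x
  linarith [GM.symm_cycle x y y, GM.symm_cycle x y x]

theorem eq_of_G_nonpos {x y : X} (h : GM.G x x y ≤ 0) : x = y := by
  by_contra hne
  exact (GM.pos_of_ne x y hne).not_ge h

end GMetricStruct

section Convergence

variable {X : Type*} {GM : GMetricStruct X}

theorem gConvergesTo_iff {x : ℕ → X} {l : X} :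
    GConvergesTo GM x l ↔ Tendsto (fun n => GM.G l (x n) (x n)) atTop (𝓝 0) := by
  simp only [GConvergesTo, GM.G_self_left_eq]

theorem GConvergesTo.of_tendsto_G {x y : ℕ → X} {l : X} (hx : GConvergesTo GM x l)
    (hxy : Tendsto (fun n => GM.G (x n) (y n) (y n)) atTop (𝓝 0)) :
    GConvergesTo GM y l := by
  rw [gConvergesTo_iff] at hx ⊢
  refine squeeze_zero (fun n => GM.nonneg _ _ _) (fun n => GM.rect l (y n) (y n) (x n)) ?_
  simpa using hx.add hxy

theorem GConvergesTo.unique {x : ℕ → X} {l l' : X} (hl : GConvergesTo GM x l)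
    (hl' : GConvergesTo GM x l') : l = l' := by
  rw [gConvergesTo_iff] at hl hl'
  have hbound (n : ℕ) : GM.G l l l' ≤ 2 * GM.G l (x n) (x n) + GM.G l' (x n) (x n) := by
    rw [GM.G_self_left_eq]
    linarith [GM.rect l' l l (x n), GM.G_le_two_mul (x n) l]
  refine GM.eq_of_G_nonpos (ge_of_tendsto' (x := atTop) ?_ hbound)
  simpa using (hl.const_mul 2).add hl'

end Convergence

section Contraction

variable {X : Type*} (GM : GMetricStruct X) (T : X → X)

theorem tendsto_G_iterate_succ_of_contracts {k : ℝ} (hk₀ : 0 ≤ k) (hk₁ : k < 1)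
    (hT : ∀ x, GM.G (T x) (T (T x)) (T (T x)) ≤ k * GM.G x (T x) (T x)) (x : X) :
    Tendsto (fun m => GM.G (T^[m] x) (T^[m + 1] x) (T^[m + 1] x)) atTop (𝓝 0) := by
  have hgeom (m : ℕ) :
      GM.G (T^[m] x) (T^[m + 1] x) (T^[m + 1] x) ≤ k ^ m * GM.G x (T x) (T x) := by
    refine le_geom (u := fun m => GM.G (T^[m] x) (T^[m + 1] x) (T^[m + 1] x)) hk₀ m ?_
    intro j _
    simpa only [Function.iterate_succ_apply'] using hT (T^[j] x)
  refine squeeze_zero (fun m => GM.nonneg _ _ _) hgeom ?_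
  simpa using (tendsto_pow_atTop_nhds_zero_of_lt_one hk₀ hk₁).mul_const (GM.G x (T x) (T x))

section

variable {a b c : ℝ} {GM} {T}

theorem G_apply_le_div_mul (hT : ∀ x y z : X, GM.G (T x) (T y) (T z) ≤
      a * GM.G x (T x) (T x) + b * GM.G y (T y) (T y) + c * GM.G z (T z) (T z))
    (hbc : b + c < 1) (x : X) :
    GM.G (T x) (T (T x)) (T (T x)) ≤ a / (1 - (b + c)) * GM.G x (T x) (T x) := by
  rw [div_mul_eq_mul_div, le_div_iff₀ (by linarith)]
  linarith [hT x (T x) (T x)]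

theorem eq_of_fixed_points (hT : ∀ x y z : X, GM.G (T x) (T y) (T z) ≤
      a * GM.G x (T x) (T x) + b * GM.G y (T y) (T y) + c * GM.G z (T z) (T z))
    {u v : X} (hu : T u = u) (hv : T v = v) : v = u := by
  have h := hT v v u
  simp only [hu, hv, GM.G_self_self, mul_zero, add_zero] at h
  exact GM.eq_of_G_nonpos h

end

end Contraction

theorem fixed_point_subsequence_general {X : Type*} (GM : GMetricStruct X)
    (T : X → X) (u : X)
    (a b c : ℝ) (ha : 0 ≤ a)
    (hlt : a + b + c < 1)
    (hT : ∀ x y z : X, GM.G (T x) (T y) (T z) ≤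
      a * GM.G x (T x) (T x) + b * GM.G y (T y) (T y) + c * GM.G z (T z) (T z))
    (hcont : GContinuousAt GM T u)
    (hsub : ∃ x : X, ∃ n : ℕ → ℕ, StrictMono n ∧
      GConvergesTo GM (fun i => T^[n i] x) u) :
    T u = u ∧ ∀ v : X, T v = v → v = u := by
  obtain ⟨x, n, hn, hconv⟩ := hsub
  have hbc : 0 < 1 - (b + c) := by linarith
  have hsteps := tendsto_G_iterate_succ_of_contracts GM T (div_nonneg ha hbc.le)
    ((div_lt_one hbc).mpr (by linarith)) (G_apply_le_div_mul hT (by linarith)) x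
  have hnext : GConvergesTo GM (fun i => T (T^[n i] x)) u := by
    refine hconv.of_tendsto_G ?_
    simpa only [Function.comp_def, Function.iterate_succ_apply'] using
      hsteps.comp hn.tendsto_atTop
  have hTu : T u = u := (hcont _ hconv).unique hnext
  exact ⟨hTu, fun v hv => eq_of_fixed_points hT hTu hv⟩

theorem fixed_point_subsequence {X : Type*} [Nonempty X] (GM : GMetricStruct X)
    (T : X → X) (u : X)
    (a b c : ℝ) (ha : 0 ≤ a) (hb : 0 ≤ b) (hc : 0 ≤ c)
    (hpos : 0 < a + b + c) (hlt : a + b + c < 1)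
    (hT : ∀ x y z : X, GM.G (T x) (T y) (T z) ≤
      a * GM.G x (T x) (T x) + b * GM.G y (T y) (T y) + c * GM.G z (T z) (T z))
    (hcont : GContinuousAt GM T u)
    (hsub : ∃ x : X, ∃ n : ℕ → ℕ, StrictMono n ∧
      GConvergesTo GM (fun i => T^[n i] x) u) :
    T u = u ∧ ∀ v : X, T v = v → v = u :=
  fixed_point_subsequence_general GM T u a b c ha hlt hT hcont hsub
end
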